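/- arXiv:1106.3193 — 2 statements merged into one kernel-verified Lean document; each statement's English description precedes it below -/
import Mathlib

section
/- Let λ, ε₁, ε₂ ∈ F_3 \ {0}, ν ∈ F_3, δ = λ + ε₂ with δ ≠ 0. Define ε* = 1 if ν = 0 and ε* = -1 if ν ≠ 0. Set U = λT³ - ε₂T + ν and V = ε₁(T² + 1). Then U/V equals the finite continued fraction [ε₁λT, -ε₁(δT + ν), -ε₁(ε*δT + ν)], i.e., U/V = ε₁λT + 1/(-ε₁(δT + ν) + 1/(-ε₁(ε*δT + ν))) as rational functions over F_3. -/
/-!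
With `δ = λ + ε₂`, `P = -ε₁(δT + ν)` and `Q = -ε₁(ε*δT + ν)`, the relations `ε₁² = δ² = 1`,
`ν² = ε* - 1` and `ε*ν = -ν`, valid in `F_3`, give `PQ + 1 = ε*(T² + 1)`. So the tail
`(P + Q⁻¹)⁻¹ = Q / (PQ + 1)` has denominator `ε*(T² + 1)`, and adding `ε₁λT` gives `U/V`.
-/

open RatFunc

theorem add_inv_inv_eq_div {K : Type*} [Field K] (b : K) {c : K} (hc : c ≠ 0) :
    (b + c⁻¹)⁻¹ = c / (b * c + 1) := by
  rw [← inv_div, inv_eq_one_div c, add_div' _ _ _ hc]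

theorem div_eq_continuedFraction_of_relations {K : Type*} [Field K] {lam e1 e2 nu es δ T : K}
    (he1 : e1 * e1 = 1) (hδ : δ = lam + e2) (hδ1 : δ * δ = 1) (hnu : nu * nu = es - 1)
    (hes_nu : es * nu = -nu) (hes : es ≠ 0) (hT : T ^ 2 + 1 ≠ 0) (hQ : es * δ * T + nu ≠ 0) :
    (lam * T ^ 3 - e2 * T + nu) / (e1 * (T ^ 2 + 1)) =
      e1 * lam * T + (-e1 * (δ * T + nu) + (-e1 * (es * δ * T + nu))⁻¹)⁻¹ := by
  have he1' : e1 ≠ 0 := left_ne_zero_of_mul_eq_one he1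
  have hPQ : -e1 * (δ * T + nu) * (-e1 * (es * δ * T + nu)) + 1 = es * (T ^ 2 + 1) := by
    linear_combination (es * δ ^ 2 * T ^ 2 + δ * T * nu * (1 + es) + nu ^ 2) * he1
      + es * T ^ 2 * hδ1 + δ * T * hes_nu + hnu
  rw [add_inv_inv_eq_div _ (mul_ne_zero (neg_ne_zero.2 he1') hQ), hPQ]
  field_simp
  linear_combination -(lam * T * (T ^ 2 + 1) * es - es * δ * T - nu) * he1 + es * T * hδ + hes_nu

theorem RatFunc.C_mul_X_add_C_ne_zero {K : Type*} [Field K] {a : K} (ha : a ≠ 0) (b : K) :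
    C a * X + C b ≠ 0 := by
  have hp : Polynomial.C a * Polynomial.X + Polynomial.C b ≠ 0 := fun h => by
    simpa [h] using Polynomial.degree_linear ha (b := b)
  simpa [algebraMap_C, algebraMap_X] using algebraMap_ne_zero hp

theorem RatFunc.X_sq_add_one_ne_zero {K : Type*} [Field K] : (X : RatFunc K) ^ 2 + 1 ≠ 0 := by
  simpa [algebraMap_C, algebraMap_X] using
    algebraMap_ne_zero (K := K) (Polynomial.X_pow_add_C_ne_zero two_pos (1 : K))

theorem ZMod.three_mul_self_of_ne_zero {a : ZMod 3} (ha : a ≠ 0) : a * a = 1 := by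
  revert a; decide

theorem ZMod.three_mul_self (a : ZMod 3) : a * a = (if a = 0 then 1 else -1) - 1 := by
  revert a; decide

theorem ZMod.three_ite_mul_self (a : ZMod 3) : (if a = 0 then 1 else -1) * a = -a := by
  revert a; decide

theorem stmt3_general (lam e1 e2 nu : ZMod 3) (he1 : e1 ≠ 0) (hdelta : lam + e2 ≠ 0) :
    let es : ZMod 3 := if nu = 0 then 1 else -1
    let T : RatFunc (ZMod 3) := RatFunc.X
    let c : ZMod 3 → RatFunc (ZMod 3) := fun z => RatFunc.C z
    (c lam * T ^ 3 - c e2 * T + c nu) / (c e1 * (T ^ 2 + 1)) =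
      c e1 * c lam * T +
        (-(c e1) * (c (lam + e2) * T + c nu) +
          (-(c e1) * (c es * c (lam + e2) * T + c nu))⁻¹)⁻¹ := by
  intro es T c
  have hes : es ≠ 0 := by unfold es; split_ifs <;> decide
  have hQ : c es * c (lam + e2) * T + c nu ≠ 0 := by
    simpa only [c, ← map_mul] using C_mul_X_add_C_ne_zero (mul_ne_zero hes hdelta) nu
  refine div_eq_continuedFraction_of_relations ?_ (map_add C lam e2) ?_ ?_ ?_
    ((map_ne_zero C).2 hes) X_sq_add_one_ne_zero hQ
  · rw [← map_mul, ZMod.three_mul_self_of_ne_zero he1, map_one]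
  · rw [← map_mul, ZMod.three_mul_self_of_ne_zero hdelta, map_one]
  · rw [← map_mul, ZMod.three_mul_self, map_sub, map_one]
  · rw [← map_mul, ZMod.three_ite_mul_self, map_neg]

/-- Continued fraction expansion of U/V in F_3(T):
    U/V = [ε₁λT, -ε₁(δT+ν), -ε₁(ε*δT+ν)]. -/
theorem stmt3 (lam e1 e2 nu : ZMod 3) (hlam : lam ≠ 0) (he1 : e1 ≠ 0)
    (he2 : e2 ≠ 0) (hdelta : lam + e2 ≠ 0) :
    let es : ZMod 3 := if nu = 0 then 1 else -1
    let T : RatFunc (ZMod 3) := RatFunc.X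
    let c : ZMod 3 → RatFunc (ZMod 3) := fun z => RatFunc.C z
    (c lam * T ^ 3 - c e2 * T + c nu) / (c e1 * (T ^ 2 + 1)) =
      c e1 * c lam * T +
        (-(c e1) * (c (lam + e2) * T + c nu) +
          (-(c e1) * (c es * c (lam + e2) * T + c nu))⁻¹)⁻¹ :=
  stmt3_general lam e1 e2 nu he1 hdelta
end

section
/- Let l ≥ 1, and in F_3((T⁻¹)) suppose α_n = [a_n, α_{n+1}] (i.e., α_n = a_n + 1/α_{n+1}) with a_n = λ_n T + μ_n, λ_n ∈ F_3 \ {0}, μ_n ∈ F_3, and α_n³ = ε₁(T²+1)α_{f(n)} + ε_{2,n}T + ν_{n-1} with ε₁, ε_{2,n} ∈ F_3 \ {0}, ν_{n-1} ∈ F_3, f(n) = 3n + l - 2. Set ν_n = μ_n - ν_{n-1}, δ_n = λ_n + ε_{2,n}, assume δ_n ≠ 0, and set ε*_n = 1 if ν_n = 0, ε*_n = -1 otherwise. Then a_{f(n)} = ε₁λ_n T, a_{f(n)+1} = -ε₁(δ_n T + ν_n), a_{f(n)+2} = -ε₁(ε*_n δ_n T + ν_n), and α_{n+1}³ = ε₁(T²+1)α_{f(n+1)}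 + (-ε*_n δ_n)T + ν_n. -/
/-!
Because a_n has degree 1 and cubing is additive in characteristic 3, α_n³ = λ_n T³ + μ_n + x
with x = α_{n+1}⁻³ of T⁻¹-order at least 3. The hyperquadratic relation then writes α_{f(n)} as a
quotient u/v, and the next three steps of the continued fraction expansion are the steps of the
Euclidean algorithm on (u, v): as long as the remainders have strictly increasing order, each
quotient is the partial quotient and the ratio of consecutive remainders is the next complete
quotient. Using only ε² = 1 for ε ∈ F₃ˣ and ε* = 1 + ν², three division steps bring the remainder
down to ε* x (T² + 1), which expresses α_{f(n)+3} through x⁻¹ = α_{n+1}³.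
-/

open HahnSeries

namespace HyperquadraticCF

section Ring

variable {R : Type*} [Ring R]

theorem C_mul_single_neg_one (c : R) :
    (C c : LaurentSeries R) * single (-1) 1 = single (-1) c := by
  rw [C_apply, single_mul_single, zero_add, mul_one]

theorem eq_of_C_mul_T_add_C_add_eq {c₁ c₀ d₁ d₀ : R} {r s : LaurentSeries R}
    (hr : ∀ k ≤ 0, r.coeff k = 0) (hs : ∀ k ≤ 0, s.coeff k = 0)
    (h : C c₁ * single (-1) 1 + C c₀ + r = C d₁ * single (-1) 1 + C d₀ + s) :
    c₁ = d₁ ∧ c₀ = d₀ ∧ r = s := by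
  rw [C_mul_single_neg_one, C_mul_single_neg_one, C_apply, C_apply] at h
  have h₁ := congrArg (coeff · (-1)) h
  have h₀ := congrArg (coeff · 0) h
  simp only [coeff_add, coeff_single_same, coeff_single_of_ne (show (-1 : ℤ) ≠ 0 by norm_num),
    coeff_single_of_ne (show (0 : ℤ) ≠ -1 by norm_num), hr (-1) (by norm_num),
    hs (-1) (by norm_num), hr 0 le_rfl, hs 0 le_rfl, add_zero, zero_add] at h₁ h₀
  subst h₁ h₀
  exact ⟨rfl, rfl, add_left_cancel h⟩

theorem coeff_eq_zero_of_le_of_order_pos {r : LaurentSeries R} (hr : 0 < r.order) :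
    ∀ k ≤ 0, r.coeff k = 0 :=
  fun _ hk => coeff_eq_zero_of_lt_order (hk.trans_lt hr)

theorem single_add_ne_zero_and_order {m : ℤ} {c : R} {g : LaurentSeries R} (hc : c ≠ 0)
    (hg : ∀ k ≤ m, g.coeff k = 0) : single m c + g ≠ 0 ∧ (single m c + g).order = m := by
  have hm : (single m c + g).coeff m = c := by
    rw [coeff_add, coeff_single_same, hg m le_rfl, add_zero]
  have hne : single m c + g ≠ 0 := fun h => hc (by rw [← hm, h, coeff_zero])
  refine ⟨hne, le_antisymm (order_le_of_coeff_ne_zero (by rwa [hm])) ?_⟩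
  refine (le_order_iff_forall hne).2 fun k hk => ?_
  rw [coeff_add, coeff_single_of_ne hk.ne, hg k hk.le, add_zero]

theorem C_mul_C_self {z : R} (hz : z * z = 1) : (C z : LaurentSeries R) * C z = 1 := by
  rw [← map_mul, hz, map_one]

end Ring

section Field

variable {F : Type*} [Field F]

theorem order_inv {f : LaurentSeries F} (hf : f ≠ 0) : f⁻¹.order = -f.order := by
  have h := order_mul hf (inv_ne_zero hf)
  rw [mul_inv_cancel₀ hf, order_one] at h
  omega

theorem cf_step_of_eq_mul_add {α α' a u v w : LaurentSeries F} {l m c₁ c₀ : F}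
    (hα : α = a + α'⁻¹) (ha : a = C l * single (-1) 1 + C m)
    (hα' : α' ≠ 0 ∧ α'.order < 0) (huv : α = u / v) (hv : v ≠ 0) (hw : w ≠ 0)
    (hvw : v.order < w.order) (hdiv : u = (C c₁ * single (-1) 1 + C c₀) * v + w) :
    a = C c₁ * single (-1) 1 + C c₀ ∧ α' = v / w := by
  have hsplit : C l * single (-1) 1 + C m + α'⁻¹ = C c₁ * single (-1) 1 + C c₀ + w / v := by
    rw [← ha, ← hα, huv, hdiv, add_div, mul_div_cancel_right₀ _ hv]
  obtain ⟨rfl, rfl, hrem⟩ := eq_of_C_mul_T_add_C_add_eq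
    (coeff_eq_zero_of_le_of_order_pos (by rw [order_inv hα'.1]; omega))
    (coeff_eq_zero_of_le_of_order_pos
      (by rw [div_eq_mul_inv, order_mul hw (inv_ne_zero hv), order_inv hv]; omega)) hsplit
  exact ⟨ha, by rw [← inv_div, ← hrem, inv_inv]⟩

theorem le_order_inv_pow {f : LaurentSeries F} (hf : f ≠ 0) (h : f.order < 0)
    (k : ℕ) : (k : ℤ) ≤ (f⁻¹ ^ k).order := by
  rw [order_pow, order_inv hf, nsmul_eq_mul]
  nlinarith

end Field

theorem C_mul_T_add_C_add_pow_char {p : ℕ} [Fact p.Prime] (l m : ZMod p)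
    (r : LaurentSeries (ZMod p)) :
    (C l * single (-1) 1 + C m + r) ^ p = C l * single (-1) 1 ^ p + C m + r ^ p := by
  have : CharP (LaurentSeries (ZMod p)) p := charP_of_injective_ringHom C_injective p
  rw [add_pow_char, add_pow_char, mul_pow, ← map_pow C, ← map_pow C, ZMod.pow_card,
    ZMod.pow_card]

theorem zmod3_mul_self_eq_one : ∀ {z : ZMod 3}, z ≠ 0 → z * z = 1 := by decide

def epsStar (ν : ZMod 3) : ZMod 3 := if ν = 0 then 1 else -1

theorem epsStar_mul_self : ∀ ν, epsStar ν * epsStar ν = 1 := by decide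
theorem epsStar_eq_one_add_mul_self : ∀ ν, epsStar ν = 1 + ν * ν := by decide
theorem mul_one_add_epsStar : ∀ ν, ν * (1 + epsStar ν) = 0 := by decide

section Remainders

local notation "T" => (single (-1 : ℤ) (1 : ZMod 3) : LaurentSeries (ZMod 3))

variable (e d ν : ZMod 3) (x : LaurentSeries (ZMod 3))

/-- Remainders of the Euclidean algorithm computing the expansion of α_{f(n)}: `x` stands for
α_{n+1}⁻³, `d` for δ_n and `ν` for ν_n. -/
noncomputable def rem : ℕ → LaurentSeries (ZMod 3)
  | 0 => C e * (T ^ 2 + 1)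
  | 1 => C (-d) * T + C ν + x
  | 2 => C e * (C (epsStar ν) + (C d * T + C ν) * x)
  | _ => C (epsStar ν) * x * (T ^ 2 + 1)

variable {e d ν x}

theorem C_epsStar (ν : ZMod 3) : (C (epsStar ν) : LaurentSeries (ZMod 3)) = 1 + C ν * C ν := by
  rw [epsStar_eq_one_add_mul_self, map_add, map_one, map_mul]

theorem C_mul_one_add_C_epsStar (ν : ZMod 3) :
    (C ν : LaurentSeries (ZMod 3)) * (1 + C (epsStar ν)) = 0 := by
  rw [← map_one C, ← map_add, ← map_mul, mul_one_add_epsStar, map_zero]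

theorem cube_sub_eq_mul_rem_zero_add_rem_one {l m e₂ ν' : ZMod 3} (he : e ≠ 0) :
    C l * T ^ 3 + C m + x - C e₂ * T - C ν' =
      (C (e * l) * T + C 0) * rem e (l + e₂) (m - ν') x 0 + rem e (l + e₂) (m - ν') x 1 := by
  simp only [rem, map_mul, map_neg, map_add, map_sub, map_zero]
  linear_combination (-(C l * T * (T ^ 2 + 1))) * C_mul_C_self (zmod3_mul_self_eq_one he)

theorem rem_zero_eq_mul_rem_one_add_rem_two (hd : d ≠ 0) :
    rem e d ν x 0 = (C (-(e * d)) * T + C (-(e * ν))) * rem e d ν x 1 + rem e d ν x 2 := by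
  simp only [rem, map_mul, map_neg]
  linear_combination (-(C e * T ^ 2)) * C_mul_C_self (zmod3_mul_self_eq_one hd)
    - C e * C_epsStar ν

theorem rem_one_eq_mul_rem_two_add_rem_three (he : e ≠ 0) (hd : d ≠ 0) :
    rem e d ν x 1 =
      (C (-(e * (epsStar ν * d))) * T + C (-(e * ν))) * rem e d ν x 2 + rem e d ν x 3 := by
  simp only [rem, map_mul, map_neg]
  linear_combination
    ((C (epsStar ν) * C d * T + C ν) * (C (epsStar ν) + (C d * T + C ν) * x)) *
        C_mul_C_self (zmod3_mul_self_eq_one he)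
      + C d * T * C_mul_C_self (epsStar_mul_self ν)
      + (1 + x * C d * T) * C_mul_one_add_C_epsStar ν
      - x * C_epsStar ν + x * C (epsStar ν) * T ^ 2 * C_mul_C_self (zmod3_mul_self_eq_one hd)

theorem inv_eq_rem_two_div_rem_three (he : e ≠ 0) (h3 : rem e d ν x 3 ≠ 0) :
    x⁻¹ = C e * (T ^ 2 + 1) * (rem e d ν x 2 / rem e d ν x 3)
      + C (-(epsStar ν * d)) * T + C ν := by
  have h3' : C (epsStar ν) * x * (T ^ 2 + 1) ≠ 0 := h3
  have hP := right_ne_zero_of_mul h3'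
  have hx := right_ne_zero_of_mul (left_ne_zero_of_mul h3')
  have hs := left_ne_zero_of_mul (left_ne_zero_of_mul h3')
  simp only [rem, map_mul, map_neg]
  field_simp
  linear_combination
    (-(C (epsStar ν) + x * (C d * T + C ν))) * C_mul_C_self (zmod3_mul_self_eq_one he)
    + x * C d * T * C_mul_C_self (epsStar_mul_self ν) - x * C_mul_one_add_C_epsStar ν

theorem T_sq_add_one_ne_zero_and_order : T ^ 2 + 1 ≠ 0 ∧ (T ^ 2 + 1).order = -2 := by
  rw [single_pow, one_pow, show (2 • (-1) : ℤ) = -2 by norm_num]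
  exact single_add_ne_zero_and_order one_ne_zero fun k hk => by rw [coeff_one, if_neg (by omega)]

theorem C_mul_T_add_C_ne_zero_and_order (hd : d ≠ 0) :
    C d * T + C ν ≠ 0 ∧ (C d * T + C ν).order = -1 := by
  rw [C_mul_single_neg_one, C_apply]
  exact single_add_ne_zero_and_order hd fun k hk => coeff_single_of_ne (by omega)

variable (ν)

theorem rem_zero_ne_zero_and_order (he : e ≠ 0) :
    rem e d ν x 0 ≠ 0 ∧ (rem e d ν x 0).order = -2 := by
  obtain ⟨hP, hPord⟩ := T_sq_add_one_ne_zero_and_order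
  refine ⟨mul_ne_zero (C_ne_zero he) hP, ?_⟩
  rw [rem, order_mul (C_ne_zero he) hP, order_C, hPord, zero_add]

theorem rem_one_ne_zero_and_order (hd : d ≠ 0) (hx : 3 ≤ x.order) :
    rem e d ν x 1 ≠ 0 ∧ (rem e d ν x 1).order = -1 := by
  rw [rem, add_assoc, C_mul_single_neg_one]
  refine single_add_ne_zero_and_order (neg_ne_zero.2 hd) fun k hk => ?_
  rw [coeff_add, C_apply, coeff_single_of_ne (by omega), coeff_eq_zero_of_lt_order (by omega),
    add_zero]

theorem rem_two_ne_zero_and_order (he : e ≠ 0) (hd : d ≠ 0) (hx0 : x ≠ 0) (hx : 3 ≤ x.order) :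
    rem e d ν x 2 ≠ 0 ∧ (rem e d ν x 2).order = 0 := by
  obtain ⟨hw, hword⟩ := C_mul_T_add_C_ne_zero_and_order (ν := ν) hd
  have hg : C e * (C d * T + C ν) * x ≠ 0 := mul_ne_zero (mul_ne_zero (C_ne_zero he) hw) hx0
  have hgord : 2 ≤ (C e * (C d * T + C ν) * x).order := by
    rw [order_mul (mul_ne_zero (C_ne_zero he) hw) hx0, order_mul (C_ne_zero he) hw, order_C,
      hword]
    omega
  have hs : epsStar ν ≠ 0 := left_ne_zero_of_mul_eq_one (epsStar_mul_self ν)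
  rw [rem, mul_add, ← map_mul, C_apply, ← mul_assoc]
  exact single_add_ne_zero_and_order (mul_ne_zero he hs) fun k hk =>
    coeff_eq_zero_of_lt_order (by omega)

theorem rem_three_ne_zero_and_order (hx0 : x ≠ 0) (hx : 3 ≤ x.order) :
    rem e d ν x 3 ≠ 0 ∧ 1 ≤ (rem e d ν x 3).order := by
  obtain ⟨hP, hPord⟩ := T_sq_add_one_ne_zero_and_order
  have hs : C (epsStar ν) ≠ (0 : LaurentSeries (ZMod 3)) :=
    C_ne_zero (left_ne_zero_of_mul_eq_one (epsStar_mul_self ν))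
  refine ⟨mul_ne_zero (mul_ne_zero hs hx0) hP, ?_⟩
  change 1 ≤ (C (epsStar ν) * x * (T ^ 2 + 1)).order
  rw [order_mul (mul_ne_zero hs hx0) hP, order_mul hs hx0, order_C, hPord]
  omega

variable {ν}

theorem rem_ne_zero (he : e ≠ 0) (hd : d ≠ 0) (hx0 : x ≠ 0) (hx : 3 ≤ x.order) :
    ∀ i ≤ 3, rem e d ν x i ≠ 0 := by
  intro i hi
  interval_cases i
  exacts [(rem_zero_ne_zero_and_order ν he).1, (rem_one_ne_zero_and_order ν hd hx).1,
    (rem_two_ne_zero_and_order ν he hd hx0 hx).1, (rem_three_ne_zero_and_order ν hx0 hx).1]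

theorem order_rem_lt_succ (he : e ≠ 0) (hd : d ≠ 0) (hx0 : x ≠ 0) (hx : 3 ≤ x.order) :
    ∀ i < 3, (rem e d ν x i).order < (rem e d ν x (i + 1)).order := by
  have h0 := (rem_zero_ne_zero_and_order ν (x := x) (d := d) he).2
  have h1 := (rem_one_ne_zero_and_order ν (e := e) hd hx).2
  have h2 := (rem_two_ne_zero_and_order ν he hd hx0 hx).2
  have h3 := (rem_three_ne_zero_and_order ν (e := e) (d := d) hx0 hx).2
  intro i hi
  interval_cases i <;> simp only [zero_add, Nat.reduceAdd] <;> omega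

end Remainders

end HyperquadraticCF

open HyperquadraticCF

theorem stmt17_general (l : ℕ)
    (α a : ℕ → LaurentSeries (ZMod 3)) (lam mu : ℕ → ZMod 3)
    (n : ℕ) (hn : 1 ≤ n) (e1 e2 nu' : ZMod 3) (he1 : e1 ≠ 0) :
    let T : LaurentSeries (ZMod 3) := HahnSeries.single (-1) 1
    let cc : ZMod 3 → LaurentSeries (ZMod 3) := fun z => HahnSeries.C z
    let nun : ZMod 3 := mu n - nu'
    let dn : ZMod 3 := lam n + e2
    let es : ZMod 3 := if nun = 0 then 1 else -1
    -- all partial quotients have degree 1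
    (∀ j, 1 ≤ j → lam j ≠ 0 ∧ a j = cc (lam j) * T + cc (mu j)) →
    -- continued fraction algorithm: α_j = a_j + 1/α_{j+1}
    (∀ j, 1 ≤ j → α j = a j + (α (j + 1))⁻¹) →
    -- complete quotients have absolute value > 1
    (∀ j, 1 ≤ j → α j ≠ 0 ∧ (α j).order < 0) →
    -- hyperquadratic relation at rank n
    α n ^ 3 = cc e1 * (T ^ 2 + 1) * α (3 * n + l - 2) + cc e2 * T + cc nu' →
    dn ≠ 0 →
    a (3 * n + l - 2) = cc e1 * cc (lam n) * T ∧
      a (3 * n + l - 2 + 1) = -(cc e1) * (cc dn * T + cc nun) ∧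
      a (3 * n + l - 2 + 2) = -(cc e1) * (cc es * cc dn * T + cc nun) ∧
      α (n + 1) ^ 3 =
        cc e1 * (T ^ 2 + 1) * α (3 * (n + 1) + l - 2) + cc (-(es * dn)) * T + cc nun := by
  intro T cc nun dn es hdeg hstep hord hhyp hdn
  rw [show 3 * (n + 1) + l - 2 = 3 * n + l - 2 + 3 by omega]
  set F := 3 * n + l - 2
  obtain ⟨hα0, hαord⟩ := hord (n + 1) (by omega)
  set x := (α (n + 1))⁻¹ ^ 3 with hx
  have hx0 : x ≠ 0 := pow_ne_zero 3 (inv_ne_zero hα0)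
  have hx3 : 3 ≤ x.order := le_order_inv_pow hα0 hαord 3
  have hne := rem_ne_zero (ν := nun) he1 hdn hx0 hx3
  have hlt := order_rem_lt_succ (ν := nun) he1 hdn hx0 hx3
  have hcube : α n ^ 3 = C (lam n) * T ^ 3 + C (mu n) + x := by
    rw [hstep n hn, (hdeg n hn).2]
    exact C_mul_T_add_C_add_pow_char _ _ _
  have hαF :
      α F = (C (lam n) * T ^ 3 + C (mu n) + x - C e2 * T - C nu') / rem e1 dn nun x 0 :=
    eq_div_of_mul_eq (hne 0 (by norm_num)) (by rw [← hcube, hhyp]; simp only [rem]; ring)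
  obtain ⟨haF, hα1⟩ := cf_step_of_eq_mul_add (hstep F (by omega)) (hdeg F (by omega)).2
    (hord (F + 1) (by omega)) hαF (hne 0 (by norm_num)) (hne 1 (by norm_num)) (hlt 0 (by norm_num))
    (cube_sub_eq_mul_rem_zero_add_rem_one he1)
  obtain ⟨haF1, hα2⟩ := cf_step_of_eq_mul_add (hstep (F + 1) (by omega)) (hdeg (F + 1) (by omega)).2
    (hord (F + 2) (by omega)) hα1 (hne 1 (by norm_num)) (hne 2 (by norm_num)) (hlt 1 (by norm_num))
    (rem_zero_eq_mul_rem_one_add_rem_two hdn)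
  obtain ⟨haF2, hα3⟩ := cf_step_of_eq_mul_add (hstep (F + 2) (by omega)) (hdeg (F + 2) (by omega)).2
    (hord (F + 3) (by omega)) hα2 (hne 2 (by norm_num)) (hne 3 (by norm_num)) (hlt 2 (by norm_num))
    (rem_one_eq_mul_rem_two_add_rem_three he1 hdn)
  refine ⟨?_, ?_, ?_, ?_⟩
  · rw [haF, map_mul, map_zero, add_zero]
  · rw [haF1]; simp only [cc, map_neg, map_mul]; ring
  · rw [haF2, show epsStar nun = es from rfl]; simp only [cc, map_neg, map_mul]; ring
  · rw [hα3, show α (n + 1) ^ 3 = x⁻¹ by rw [hx, inv_pow, inv_inv]]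
    exact inv_eq_rem_two_div_rem_three he1 (hne 3 (by norm_num))

/-- Lemma 2 of the paper: the inductive step propagating the hyperquadratic
    relation. If α_n³ = ε₁(T²+1)α_{f(n)} + ε_{2,n}T + ν_{n-1} with f(n) = 3n+l-2,
    all partial quotients a_k = λ_kT + μ_k of degree 1, all complete quotients of
    absolute value > 1, and δ_n = λ_n + ε_{2,n} ≠ 0, then
    a_{f(n)} = ε₁λ_nT, a_{f(n)+1} = -ε₁(δ_nT + ν_n), a_{f(n)+2} = -ε₁(ε*_nδ_nT + ν_n)
    and α_{n+1}³ = ε₁(T²+1)α_{f(n+1)} - ε*_nδ_nT + ν_n, where ν_n = μ_n - ν_{n-1}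
    and ε*_n = 1 if ν_n = 0, -1 otherwise. -/
theorem stmt17 (l : ℕ) (hl : 1 ≤ l)
    (α a : ℕ → LaurentSeries (ZMod 3)) (lam mu : ℕ → ZMod 3)
    (n : ℕ) (hn : 1 ≤ n) (e1 e2 nu' : ZMod 3) (he1 : e1 ≠ 0) (he2 : e2 ≠ 0) :
    let T : LaurentSeries (ZMod 3) := HahnSeries.single (-1) 1
    let cc : ZMod 3 → LaurentSeries (ZMod 3) := fun z => HahnSeries.C z
    let nun : ZMod 3 := mu n - nu'
    let dn : ZMod 3 := lam n + e2
    let es : ZMod 3 := if nun = 0 then 1 else -1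
    -- all partial quotients have degree 1
    (∀ j, 1 ≤ j → lam j ≠ 0 ∧ a j = cc (lam j) * T + cc (mu j)) →
    -- continued fraction algorithm: α_j = a_j + 1/α_{j+1}
    (∀ j, 1 ≤ j → α j = a j + (α (j + 1))⁻¹) →
    -- complete quotients have absolute value > 1
    (∀ j, 1 ≤ j → α j ≠ 0 ∧ (α j).order < 0) →
    -- hyperquadratic relation at rank n
    α n ^ 3 = cc e1 * (T ^ 2 + 1) * α (3 * n + l - 2) + cc e2 * T + cc nu' →
    dn ≠ 0 →
    a (3 * n + l - 2) = cc e1 * cc (lam n) * T ∧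
      a (3 * n + l - 2 + 1) = -(cc e1) * (cc dn * T + cc nun) ∧
      a (3 * n + l - 2 + 2) = -(cc e1) * (cc es * cc dn * T + cc nun) ∧
      α (n + 1) ^ 3 =
        cc e1 * (T ^ 2 + 1) * α (3 * (n + 1) + l - 2) + cc (-(es * dn)) * T + cc nun :=
  stmt17_general l α a lam mu n hn e1 e2 nu' he1
end
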